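/- arXiv:2201.00110 — 2 statements merged into one kernel-verified Lean document; each statement's English description precedes it below -/
import Mathlib

section
/- Let f be a homeomorphism of a compact metric space X that is totally disconnected (equivalently, of topological dimension 0). If every point of X is positively recurrent for f and f is topologically transitive (some point has dense orbit), then f is minimal, i.e., every point of X has dense orbit. -/
open Filter Topology

/-- The `n`-th iterate (`n ∈ ℤ`) of a homeomorphism `f`, as a map `X → X`. -/
def iterZ {X : Type*} [TopologicalSpace X] (f : X ≃ₜ X) (n : ℤ) : X → X :=
  ⇑(f.toEquiv ^ n)

/-- The ω-limit set of `x`: limits of `f^{nᵢ}(x)` along strictly increasing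
sequences `0 < n₁ < n₂ < ⋯`. -/
def posLimitSet {X : Type*} [TopologicalSpace X] (f : X ≃ₜ X) (x : X) : Set X :=
  {y | ∃ n : ℕ → ℕ, StrictMono n ∧ 0 < n 0 ∧
    Tendsto (fun i => iterZ f (n i) x) atTop (𝓝 y)}

/-- The α-limit set of `x`: limits of `f^{-nᵢ}(x)` along strictly increasing
sequences `0 < n₁ < n₂ < ⋯`. -/
def negLimitSet {X : Type*} [TopologicalSpace X] (f : X ≃ₜ X) (x : X) : Set X :=
  {y | ∃ n : ℕ → ℕ, StrictMono n ∧ 0 < n 0 ∧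
    Tendsto (fun i => iterZ f (-(n i : ℤ)) x) atTop (𝓝 y)}

/-- `x` is recurrent if it is positively or negatively recurrent. -/
def RecurrentPt {X : Type*} [TopologicalSpace X] (f : X ≃ₜ X) (x : X) : Prop :=
  x ∈ posLimitSet f x ∨ x ∈ negLimitSet f x

/-- `f` is expansive with expansivity constant `c`. -/
def ExpansiveWith {X : Type*} [MetricSpace X] (f : X ≃ₜ X) (c : ℝ) : Prop :=
  0 < c ∧ ∀ x y : X, x ≠ y → ∃ n : ℤ, c < dist (iterZ f n x) (iterZ f n y)

/-- `f` is expansive. -/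
def Expansive {X : Type*} [MetricSpace X] (f : X ≃ₜ X) : Prop :=
  ∃ c : ℝ, ExpansiveWith f c

/-- The full orbit `{fⁿ(x) : n ∈ ℤ}` of a point. -/
def fullOrbit {X : Type*} [TopologicalSpace X] (f : X ≃ₜ X) (x : X) : Set X :=
  Set.range fun n : ℤ => iterZ f n x

/-- `E` is a minimal set: nonempty, closed, invariant (`f(E) = E`), with no proper
nonempty closed invariant subset. -/
def IsMinimalSet {X : Type*} [TopologicalSpace X] (f : X ≃ₜ X) (E : Set X) : Prop :=
  E.Nonempty ∧ IsClosed E ∧ f '' E = E ∧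
    ∀ E' ⊆ E, E'.Nonempty → IsClosed E' → f '' E' = E' → E' = E

/-- `x` is almost periodic: the closure of its orbit is a minimal set. -/
def AlmostPeriodicPt {X : Type*} [TopologicalSpace X] (f : X ≃ₜ X) (x : X) : Prop :=
  IsMinimalSet f (closure (fullOrbit f x))

/-- The left shift `σ` on `ℤ → F`, as a homeomorphism. -/
def shiftH (F : Type*) [TopologicalSpace F] : (ℤ → F) ≃ₜ (ℤ → F) where
  toFun x n := x (n + 1)
  invFun x n := x (n - 1)
  left_inv x := by funext n; simp
  right_inv x := by funext n; simp
  continuous_toFun := continuous_pi fun n => continuous_apply (n + 1)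
  continuous_invFun := continuous_pi fun n => continuous_apply (n - 1)

/-- The `n`-th power (`n ∈ ℕ`) of a homeomorphism, as a homeomorphism. -/
def hpow {X : Type*} [TopologicalSpace X] (f : X ≃ₜ X) : ℕ → X ≃ₜ X
  | 0 => Homeomorph.refl X
  | n + 1 => (hpow f n).trans f

/-- The local stable set `W^s_ε(x)`. -/
def localStable {X : Type*} [MetricSpace X] (f : X ≃ₜ X) (ε : ℝ) (x : X) : Set X :=
  {y | ∀ n : ℕ, dist (iterZ f n x) (iterZ f n y) ≤ ε}

/-- The local unstable set `W^u_ε(x)`. -/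
def localUnstable {X : Type*} [MetricSpace X] (f : X ≃ₜ X) (ε : ℝ) (x : X) : Set X :=
  {y | ∀ n : ℕ, dist (iterZ f (-(n : ℤ)) x) (iterZ f (-(n : ℤ)) y) ≤ ε}

/-- The stable set `W^s(x)`. -/
def stableSet {X : Type*} [MetricSpace X] (f : X ≃ₜ X) (x : X) : Set X :=
  {y | Tendsto (fun n : ℕ => dist (iterZ f n x) (iterZ f n y)) atTop (𝓝 0)}

/-- The unstable set `W^u(x)`. -/
def unstableSet {X : Type*} [MetricSpace X] (f : X ≃ₜ X) (x : X) : Set X :=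
  {y | Tendsto (fun n : ℕ => dist (iterZ f (-(n : ℤ)) x) (iterZ f (-(n : ℤ)) y)) atTop (𝓝 0)}

/-- `f` has the pseudo orbit tracing property. -/
def POTP {X : Type*} [MetricSpace X] (f : X ≃ₜ X) : Prop :=
  ∀ ε > (0 : ℝ), ∃ δ > (0 : ℝ), ∀ u : ℤ → X,
    (∀ i : ℤ, dist (f (u i)) (u (i + 1)) < δ) →
    ∃ x : X, ∀ i : ℤ, dist (iterZ f i x) (u i) < ε

/-! Fix a nonempty clopen set `U` and let `A` be the set of points whose forward orbit
meets `U`. Recurrence and compactness bound the return times to `U` by some `N`, and the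
finite union `W` of the `f⁻ⁿ(U)`, `n ≤ N`, satisfies `f(W) ⊆ W`. For a closed set this
already gives `f⁻¹(W) ⊆ W`, since each point is a limit of its own forward orbit; hence
`A = W` is clopen. `A` is also `f`-invariant, so a dense orbit forces `A = X`. As clopen
sets form a basis of `X`, every orbit is dense. -/

section Recurrence

variable {X : Type*} [TopologicalSpace X] {f : X → X}

theorem exists_iterate_succ_mem_of_mem_closure {x : X}
    (hx : x ∈ closure (Set.range fun n : ℕ => f^[n + 1] x)) {U : Set X} (hU : IsOpen U)
    (hxU : x ∈ U) : ∃ n, f^[n + 1] x ∈ U := by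
  obtain ⟨_, hn, n, rfl⟩ := mem_closure_iff.1 hx U hU hxU
  exact ⟨n, hn⟩

theorem exists_bound_iterate_succ_mem (hf : Continuous f) {U : Set X} (hUc : IsCompact U)
    (hUo : IsOpen U) (hret : ∀ x ∈ U, ∃ n, f^[n + 1] x ∈ U) :
    ∃ N, ∀ x ∈ U, ∃ n ≤ N, f^[n + 1] x ∈ U := by
  have hopen (N : ℕ) : IsOpen {x | ∃ n ≤ N, f^[n + 1] x ∈ U} := by
    have : {x | ∃ n ≤ N, f^[n + 1] x ∈ U} = ⋃ n ∈ Set.Iic N, f^[n + 1] ⁻¹' U := by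
      ext; simp
    exact this ▸ isOpen_biUnion fun n _ => hUo.preimage (hf.iterate _)
  have hmono : Monotone fun N => {x | ∃ n ≤ N, f^[n + 1] x ∈ U} :=
    fun _ _ hNM _ ⟨n, hn, hx⟩ => ⟨n, hn.trans hNM, hx⟩
  refine hUc.elim_directed_cover _ hopen (fun x hx => ?_) hmono.directed_le
  obtain ⟨n, hn⟩ := hret x hx
  exact Set.mem_iUnion.2 ⟨n, n, le_rfl, hn⟩

theorem preimage_eq_of_isClosed_of_mapsTo
    (hrec : ∀ x, x ∈ closure (Set.range fun n : ℕ => f^[n + 1] x)) {W : Set X}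
    (hW : IsClosed W) (hWf : Set.MapsTo f W W) : f ⁻¹' W = W := by
  refine subset_antisymm (fun x hx => hW.closure_subset_iff.2 ?_ (hrec x)) hWf
  rintro _ ⟨n, rfl⟩
  exact hWf.iterate n hx

theorem preimage_setOf_exists_iterate_mem
    (hrec : ∀ x, x ∈ closure (Set.range fun n : ℕ => f^[n + 1] x)) {U : Set X} (hU : IsOpen U) :
    f ⁻¹' {x | ∃ n, f^[n] x ∈ U} = {x | ∃ n, f^[n] x ∈ U} := by
  ext x
  refine ⟨fun ⟨n, hn⟩ => ⟨n + 1, hn⟩, ?_⟩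
  rintro ⟨_ | n, hn⟩
  · exact exists_iterate_succ_mem_of_mem_closure (hrec x) hU hn
  · exact ⟨n, hn⟩

theorem isClopen_setOf_exists_iterate_mem [CompactSpace X]
    (hrec : ∀ x, x ∈ closure (Set.range fun n : ℕ => f^[n + 1] x)) (hf : Continuous f)
    {U : Set X} (hU : IsClopen U) : IsClopen {x | ∃ n, f^[n] x ∈ U} := by
  obtain ⟨N, hN⟩ := exists_bound_iterate_succ_mem hf hU.1.isCompact hU.2
    fun x => exists_iterate_succ_mem_of_mem_closure (hrec x) hU.2
  set W := {x | ∃ n ≤ N, f^[n] x ∈ U}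
  have hWc : IsClosed W := by
    have : W = ⋃ n ∈ Finset.range (N + 1), f^[n] ⁻¹' U := by
      ext; simp [W]
    exact this ▸ isClosed_biUnion_finset fun n _ => hU.1.preimage (hf.iterate n)
  have hWf : Set.MapsTo f W W := by
    rintro x ⟨_ | n, hn, hx⟩
    · exact hN x hx
    · exact ⟨n, by omega, hx⟩
  have hW_eq : {x | ∃ n, f^[n] x ∈ U} = W := by
    refine subset_antisymm (fun x ⟨n, hn⟩ => ?_) fun x ⟨n, _, hn⟩ => ⟨n, hn⟩
    have hfW : f^[n] ⁻¹' W = W := by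
      rw [Set.preimage_iterate_eq]
      exact Function.iterate_fixed (preimage_eq_of_isClosed_of_mapsTo hrec hWc hWf) n
    exact hfW ▸ (⟨0, N.zero_le, hn⟩ : f^[n] x ∈ W)
  refine ⟨hW_eq ▸ hWc, ?_⟩
  rw [Set.ofPred_exists]
  exact isOpen_iUnion fun n => hU.2.preimage (hf.iterate n)

end Recurrence

section Homeomorph

variable {X : Type*} [TopologicalSpace X] (f : X ≃ₜ X)

theorem iterZ_natCast (n : ℕ) : iterZ f n = f^[n] := by
  rw [iterZ, zpow_natCast, Equiv.Perm.coe_pow]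
  rfl

theorem iterZ_mem_iff {s : Set X} (hs : f ⁻¹' s = s) (n : ℤ) (x : X) :
    iterZ f n x ∈ s ↔ x ∈ s := by
  have hf (y : X) : f y ∈ s ↔ y ∈ s := Set.ext_iff.1 hs y
  induction n using Int.induction_on generalizing x with
  | zero => simp [iterZ]
  | succ n ih =>
    rw [iterZ, zpow_add_one, Equiv.Perm.mul_apply]
    exact (ih _).trans (hf x)
  | pred n ih =>
    rw [iterZ, zpow_sub_one, Equiv.Perm.mul_apply]
    exact (ih _).trans (by simpa using (hf (f.symm x)).symm)

theorem mem_closure_range_iterate_of_mem_posLimitSet {x y : X} (h : y ∈ posLimitSet f x) :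
    y ∈ closure (Set.range fun n : ℕ => f^[n + 1] x) := by
  obtain ⟨n, hmono, hpos, htend⟩ := h
  refine mem_closure_of_tendsto htend (Eventually.of_forall fun i => ⟨n i - 1, ?_⟩)
  have : n i - 1 + 1 = n i := Nat.sub_add_cancel (hpos.trans_le (hmono.monotone i.zero_le))
  simp only [this, iterZ_natCast]

theorem eq_univ_of_isClopen_of_preimage_eq {s : Set X} (hs : IsClopen s) (hne : s.Nonempty)
    (hinv : f ⁻¹' s = s) {x : X} (hx : Dense (fullOrbit f x)) : s = Set.univ := by
  obtain ⟨_, hm, m, rfl⟩ := hx.inter_open_nonempty s hs.2 hne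
  have hxs : x ∈ s := (iterZ_mem_iff f hinv m x).1 hm
  have horbit : fullOrbit f x ⊆ s :=
    Set.range_subset_iff.2 fun n => (iterZ_mem_iff f hinv n x).2 hxs
  rw [← hs.1.closure_eq, (hx.mono horbit).closure_eq]

end Homeomorph

/-- A pointwise positively recurrent, topologically transitive
homeomorphism of a totally disconnected compact metric space is minimal. -/
theorem stmt_7 {X : Type*} [MetricSpace X] [CompactSpace X] [TotallyDisconnectedSpace X]
    (f : X ≃ₜ X) (hrec : ∀ x : X, x ∈ posLimitSet f x)
    (htrans : ∃ x : X, Dense (fullOrbit f x)) :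
    ∀ x : X, Dense (fullOrbit f x) := by
  obtain ⟨x₀, hx₀⟩ := htrans
  have hrec' (x : X) : x ∈ closure (Set.range fun n : ℕ => f^[n + 1] x) :=
    mem_closure_range_iterate_of_mem_posLimitSet f (hrec x)
  intro y
  refine isTopologicalBasis_isClopen.dense_iff.2 fun U hU hne => ?_
  have hhit : {x | ∃ n, f^[n] x ∈ U} = Set.univ :=
    eq_univ_of_isClopen_of_preimage_eq f
      (isClopen_setOf_exists_iterate_mem hrec' f.continuous hU) (hne.mono fun x hx => ⟨0, hx⟩)
      (preimage_setOf_exists_iterate_mem hrec' hU.2) hx₀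
  obtain ⟨n, hn⟩ : ∃ n, f^[n] y ∈ U := Set.eq_univ_iff_forall.1 hhit y
  exact ⟨_, hn, n, congrFun (iterZ_natCast f n) y⟩
end

section
/- Let f be an expansive homeomorphism of a compact metric space X. Then there exist a metric D on X compatible with its topology, constants γ > 0, 0 < λ < 1, and a ≥ 1 such that for every x ∈ X: (i) if y ∈ W^s_γ(x, D) then D(fⁿ(x), fⁿ(y)) ≤ a λⁿ D(x, y) for all n ≥ 0, and (ii) if y ∈ W^u_γ(x, D) then D(f^{-n}(x), f^{-n}(y)) ≤ a λⁿ D(x, y) for all n ≥ 0. -/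
open Filter Topology

/-- `dD` is a metric on `X` compatible with the topology of `X`: it satisfies the metric
axioms and the open sets of `X` are exactly the sets that are open for `dD`. -/
def IsCompatibleMetric {X : Type*} [TopologicalSpace X] (dD : X → X → ℝ) : Prop :=
  (∀ x y : X, dD x y = 0 ↔ x = y) ∧
  (∀ x y : X, dD x y = dD y x) ∧
  (∀ x y z : X, dD x z ≤ dD x y + dD y z) ∧
  (∀ s : Set X, IsOpen s ↔ ∀ x ∈ s, ∃ ε > (0 : ℝ), {y : X | dD x y < ε} ⊆ s)

/-!
For an expansivity constant `c`, measure the closeness of `x ≠ y` by the largest `m` such that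
the orbits of `x` and `y` stay `c/3`-close at all times `|i| < m`, and set `ρ(x, y) = θ ^ m`.
Uniform expansivity shows that orbits which are `c`-close on a window of length `m` are `c/3`-close
on the window shrunk by a fixed `N`; hence `ρ` satisfies `ρ(x₁, x₄) ≤ 2 max(ρ₁₂, ρ₂₃, ρ₃₄)` once
`θ ^ N ≥ 1/2`, and Frink's chain construction yields a metric `D` with `D ≤ ρ ≤ 2D`. If the
forward orbits of `x` and `y` stay close, the window for `fⁿx, fⁿy` is `n` longer than the one
for `x, y`, so `ρ` (and thus `D`, up to the factor `2`) contracts by `θ ^ n`.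
-/

open NNReal Uniformity

section Iterates

variable {X : Type*} [TopologicalSpace X]

theorem iterZ_add (f : X ≃ₜ X) (a b : ℤ) (x : X) :
    iterZ f (a + b) x = iterZ f a (iterZ f b x) := by
  simp [iterZ, zpow_add, Equiv.Perm.mul_apply]

theorem iterZ_eq_coe_zpow (f : X ≃ₜ X) (n : ℤ) : iterZ f n = ⇑(f ^ n) :=
  congrArg DFunLike.coe
    (map_zpow (⟨⟨Homeomorph.toEquiv, rfl⟩, fun _ _ => rfl⟩ : (X ≃ₜ X) →* Equiv.Perm X) f n).symm

theorem continuous_iterZ (f : X ≃ₜ X) (n : ℤ) : Continuous (iterZ f n) :=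
  iterZ_eq_coe_zpow f n ▸ (f ^ n).continuous

end Iterates

section OrbitsClose

variable {X : Type*} [MetricSpace X] {f : X ≃ₜ X} {r s : ℝ} {m n : ℕ} {x y z : X}

def OrbitsClose (f : X ≃ₜ X) (r : ℝ) (m : ℕ) (x y : X) : Prop :=
  ∀ i : ℤ, i.natAbs < m → dist (iterZ f i x) (iterZ f i y) ≤ r

theorem orbitsClose_zero : OrbitsClose f r 0 x y := fun _ hi => absurd hi (Nat.not_lt_zero _)

theorem orbitsClose_self (hr : 0 ≤ r) (m : ℕ) (x : X) : OrbitsClose f r m x x :=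
  fun i _ => (dist_self (iterZ f i x)).trans_le hr

theorem OrbitsClose.symm (h : OrbitsClose f r m x y) : OrbitsClose f r m y x :=
  fun i hi => dist_comm (iterZ f i y) (iterZ f i x) ▸ h i hi

theorem orbitsClose_comm : OrbitsClose f r m x y ↔ OrbitsClose f r m y x :=
  ⟨.symm, .symm⟩

theorem OrbitsClose.mono (h : OrbitsClose f r m x y) (hrs : r ≤ s) (hnm : n ≤ m) :
    OrbitsClose f s n x y :=
  fun i hi => (h i (hi.trans_le hnm)).trans hrs

theorem OrbitsClose.trans (hxy : OrbitsClose f r m x y) (hyz : OrbitsClose f s m y z) :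
    OrbitsClose f (r + s) m x z :=
  fun i hi => (dist_triangle _ _ _).trans (add_le_add (hxy i hi) (hyz i hi))

theorem OrbitsClose.dist_le (h : OrbitsClose f r m x y) (hm : 0 < m) : dist x y ≤ r :=
  h 0 hm

theorem OrbitsClose.shrink {R : ℝ} {N : ℕ}
    (hN : ∀ u v : X, OrbitsClose f R N u v → dist u v ≤ r) (h : OrbitsClose f R m x y) :
    OrbitsClose f r (m - N) x y := by
  intro j hj
  refine hN _ _ fun i hi => ?_
  rw [← iterZ_add, ← iterZ_add]
  exact h _ (by have := Int.natAbs_add_le i j; omega)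

/-- The unit `s` is the direction of time: `1` for forward, `-1` for backward semi-orbits. -/
theorem OrbitsClose.iterZ_of_semiorbit (h : OrbitsClose f r m x y) (s : ℤˣ)
    (hray : ∀ k : ℕ, dist (iterZ f (s * k) x) (iterZ f (s * k) y) ≤ r) (n : ℕ) :
    OrbitsClose f r (m + n) (iterZ f (s * n) x) (iterZ f (s * n) y) := by
  intro i hi
  rw [← iterZ_add, ← iterZ_add]
  rcases Int.units_eq_one_or s with rfl | rfl <;>
    simp only [Units.val_one, one_mul, Units.val_neg, neg_one_mul] at hray ⊢
  · rcases le_or_gt 0 (i + n) with h0 | h0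
    · obtain ⟨k, hk⟩ := Int.eq_ofNat_of_zero_le h0
      exact hk ▸ hray k
    · exact h _ (by omega)
  · rcases le_or_gt (i + -n) 0 with h0 | h0
    · obtain ⟨k, hk⟩ := Int.eq_ofNat_of_zero_le (neg_nonneg.2 h0)
      exact neg_neg (i + -n) ▸ hk ▸ hray k
    · exact h _ (by omega)

end OrbitsClose

section Compact

variable {X : Type*} [MetricSpace X] [CompactSpace X] {f : X ≃ₜ X}

theorem ExpansiveWith.exists_orbitsClose_imp_dist_lt {c : ℝ} (hc : ExpansiveWith f c) {ε : ℝ}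
    (hε : 0 < ε) : ∃ N : ℕ, ∀ u v : X, OrbitsClose f c N u v → dist u v < ε := by
  by_contra! h
  choose u v hclose hfar using h
  obtain ⟨p, φ, hφ, hp⟩ := CompactSpace.tendsto_subseq fun N => (u N, v N)
  have hu : Tendsto (fun k => u (φ k)) atTop (𝓝 p.1) := (continuous_fst.tendsto p).comp hp
  have hv : Tendsto (fun k => v (φ k)) atTop (𝓝 p.2) := (continuous_snd.tendsto p).comp hp
  have hne : p.1 ≠ p.2 := by
    intro heq
    have := ge_of_tendsto (hu.dist hv) (Eventually.of_forall fun k => hfar (φ k))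
    rw [heq, dist_self] at this
    linarith
  obtain ⟨i, hi⟩ := hc.2 p.1 p.2 hne
  have hiter := (((continuous_iterZ f i).tendsto _).comp hu).dist
    (((continuous_iterZ f i).tendsto _).comp hv)
  obtain ⟨k, hk, hik⟩ := ((hiter.eventually (eventually_gt_nhds hi)).and
    (eventually_gt_atTop i.natAbs)).exists
  exact (hclose (φ k) i (hik.trans_le hφ.le_apply)).not_gt hk

theorem exists_dist_lt_imp_orbitsClose (f : X ≃ₜ X) {ε : ℝ} (hε : 0 < ε) (m : ℕ) :
    ∃ δ > 0, ∀ x y : X, dist x y < δ → OrbitsClose f ε m x y := by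
  have hev : ∀ᶠ p : X × X in 𝓤 X,
      ∀ i ∈ Finset.Ioo (-(m : ℤ)) m, dist (iterZ f i p.1) (iterZ f i p.2) < ε :=
    (Finset.eventually_all _).2 fun i _ =>
      CompactSpace.uniformContinuous_of_continuous (continuous_iterZ f i)
        (Metric.dist_mem_uniformity hε)
  obtain ⟨δ, hδ, h⟩ := Metric.mem_uniformity_dist.1 hev
  exact ⟨δ, hδ, fun x y hxy i hi => (h hxy i (Finset.mem_Ioo.2 (by omega))).le⟩

end Compact

section SeparationTime

variable {X : Type*} [MetricSpace X] {f : X ≃ₜ X} {c r : ℝ} {θ : ℝ≥0} {m : ℕ} {x y : X}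

noncomputable def sepTime (f : X ≃ₜ X) (r : ℝ) (x y : X) : ℕ :=
  sSup {m | OrbitsClose f r m x y}

theorem sepTime_comm (f : X ≃ₜ X) (r : ℝ) (x y : X) : sepTime f r x y = sepTime f r y x := by
  simp only [sepTime, orbitsClose_comm]

theorem ExpansiveWith.bddAbove_orbitsClose (hc : ExpansiveWith f c) (hrc : r ≤ c)
    (hxy : x ≠ y) : BddAbove {m | OrbitsClose f r m x y} := by
  obtain ⟨i, hi⟩ := hc.2 x y hxy
  refine ⟨i.natAbs, fun m hm => not_lt.1 fun him => ?_⟩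
  exact (hm i him).not_gt (hrc.trans_lt hi)

theorem ExpansiveWith.orbitsClose_iff_le_sepTime (hc : ExpansiveWith f c) (hrc : r ≤ c)
    (hxy : x ≠ y) : OrbitsClose f r m x y ↔ m ≤ sepTime f r x y :=
  ⟨fun h => le_csSup (hc.bddAbove_orbitsClose hrc hxy) h, fun h =>
    (Nat.sSup_mem ⟨0, orbitsClose_zero⟩ (hc.bddAbove_orbitsClose hrc hxy)).mono le_rfl h⟩

/-- Without the case split the diagonal would get `θ ^ 0 = 1`: there `sepTime` is the junk value
`sSup ℕ = 0`. -/
noncomputable def sepDist (f : X ≃ₜ X) (r : ℝ) (θ : ℝ≥0) (x y : X) : ℝ≥0 :=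
  open Classical in if x = y then 0 else θ ^ sepTime f r x y

theorem sepDist_self (f : X ≃ₜ X) (r : ℝ) (θ : ℝ≥0) (x : X) : sepDist f r θ x x = 0 :=
  if_pos rfl

theorem sepDist_of_ne (hxy : x ≠ y) : sepDist f r θ x y = θ ^ sepTime f r x y :=
  if_neg hxy

theorem sepDist_comm (f : X ≃ₜ X) (r : ℝ) (θ : ℝ≥0) (x y : X) :
    sepDist f r θ x y = sepDist f r θ y x := by
  by_cases hxy : x = y
  · rw [hxy]
  · rw [sepDist_of_ne hxy, sepDist_of_ne (Ne.symm hxy), sepTime_comm]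

theorem sepDist_eq_zero_or_eq_pow (f : X ≃ₜ X) (r : ℝ) (θ : ℝ≥0) (x y : X) :
    sepDist f r θ x y = 0 ∨ ∃ m : ℕ, sepDist f r θ x y = θ ^ m := by
  by_cases hxy : x = y
  · exact .inl (hxy ▸ sepDist_self f r θ x)
  · exact .inr ⟨_, sepDist_of_ne hxy⟩

theorem sepDist_pos (hθ : 0 < θ) (hxy : x ≠ y) : 0 < sepDist f r θ x y :=
  sepDist_of_ne hxy ▸ pow_pos hθ _

/-- `N` witnesses uniform expansivity at scale `3 * r`, and `θ ^ N ≥ 1/2` pays for the loss of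
`N` in the window length. -/
structure AdaptedScale (f : X ≃ₜ X) (r : ℝ) (θ : ℝ≥0) (N : ℕ) : Prop where
  expansiveWith : ExpansiveWith f (3 * r)
  pos : 0 < r
  theta_pos : 0 < θ
  theta_lt_one : θ < 1
  dist_le_of_orbitsClose : ∀ u v : X, OrbitsClose f (3 * r) N u v → dist u v ≤ r
  one_le_two_mul_pow : 1 ≤ 2 * θ ^ N

namespace AdaptedScale

variable {N : ℕ}

theorem sepDist_le_pow_iff (h : AdaptedScale f r θ N) :
    sepDist f r θ x y ≤ θ ^ m ↔ OrbitsClose f r m x y := by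
  by_cases hxy : x = y
  · subst hxy
    simp only [sepDist_self, zero_le, orbitsClose_self h.pos.le]
  · rw [sepDist_of_ne hxy, pow_le_pow_iff_right_of_lt_one₀ h.theta_pos h.theta_lt_one,
      h.expansiveWith.orbitsClose_iff_le_sepTime (by linarith [h.pos]) hxy]

theorem sepDist_le_two_mul_max (h : AdaptedScale f r θ N) (x₁ x₂ x₃ x₄ : X) :
    sepDist f r θ x₁ x₄ ≤
      2 * max (sepDist f r θ x₁ x₂) (max (sepDist f r θ x₂ x₃) (sepDist f r θ x₃ x₄)) := by
  set R := max (sepDist f r θ x₁ x₂) (max (sepDist f r θ x₂ x₃) (sepDist f r θ x₃ x₄))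
  have hwindow : ∀ m : ℕ, R ≤ θ ^ m → sepDist f r θ x₁ x₄ ≤ 2 * θ ^ m := by
    intro m hm
    have h₁₂ := h.sepDist_le_pow_iff.1 ((le_max_left _ _).trans hm)
    have h₂₃ := h.sepDist_le_pow_iff.1 (((le_max_left _ _).trans (le_max_right _ _)).trans hm)
    have h₃₄ := h.sepDist_le_pow_iff.1 (((le_max_right _ _).trans (le_max_right _ _)).trans hm)
    have h₁₄ : OrbitsClose f r (m - N) x₁ x₄ :=
      (((h₁₂.trans h₂₃).trans h₃₄).mono (by linarith) le_rfl).shrink h.dist_le_of_orbitsClose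
    calc sepDist f r θ x₁ x₄ ≤ θ ^ (m - N) := h.sepDist_le_pow_iff.2 h₁₄
      _ ≤ 2 * θ ^ N * θ ^ (m - N) := le_mul_of_one_le_left zero_le h.one_le_two_mul_pow
      _ = 2 * θ ^ (N + (m - N)) := by ring
      _ ≤ 2 * θ ^ m :=
        mul_le_mul_right (pow_le_pow_right_of_le_one' h.theta_lt_one.le (by omega)) 2
  have hR : R = 0 ∨ ∃ m : ℕ, R = θ ^ m :=
    max_rec' (fun t => t = 0 ∨ ∃ m : ℕ, t = θ ^ m) (sepDist_eq_zero_or_eq_pow f r θ x₁ x₂)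
      (max_rec' (fun t => t = 0 ∨ ∃ m : ℕ, t = θ ^ m) (sepDist_eq_zero_or_eq_pow f r θ x₂ x₃)
        (sepDist_eq_zero_or_eq_pow f r θ x₃ x₄))
  rcases hR with hR | ⟨m, hR⟩
  · rw [hR]
    exact ge_of_tendsto'
      ((NNReal.tendsto_pow_atTop_nhds_zero_of_lt_one h.theta_lt_one).const_mul 2)
      fun m => hwindow m (hR ▸ zero_le)
  · exact hR ▸ hwindow m hR.le

end AdaptedScale

end SeparationTime

section AdaptedMetric

variable {X : Type*} [MetricSpace X] {f : X ≃ₜ X} {r : ℝ} {θ : ℝ≥0} {N : ℕ} {x y : X}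

noncomputable abbrev adaptedPseudoMetric (f : X ≃ₜ X) (r : ℝ) (θ : ℝ≥0) : PseudoMetricSpace X :=
  PseudoMetricSpace.ofPreNNDist (sepDist f r θ) (sepDist_self f r θ) (sepDist_comm f r θ)

noncomputable def adaptedDist (f : X ≃ₜ X) (r : ℝ) (θ : ℝ≥0) : X → X → ℝ :=
  @dist X (adaptedPseudoMetric f r θ).toDist

theorem adaptedDist_le_sepDist (f : X ≃ₜ X) (r : ℝ) (θ : ℝ≥0) (x y : X) :
    adaptedDist f r θ x y ≤ sepDist f r θ x y :=
  PseudoMetricSpace.dist_ofPreNNDist_le _ _ _ x y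

theorem AdaptedScale.sepDist_le_two_mul_adaptedDist (h : AdaptedScale f r θ N) (x y : X) :
    (sepDist f r θ x y : ℝ) ≤ 2 * adaptedDist f r θ x y :=
  PseudoMetricSpace.le_two_mul_dist_ofPreNNDist _ _ _ h.sepDist_le_two_mul_max x y

theorem isOpen_iff_of_uniformEquivalent {X : Type*} [PseudoMetricSpace X] (D : X → X → ℝ)
    (hD : ∀ δ > 0, ∃ ε > 0, ∀ x y, D x y < ε → dist x y < δ)
    (hdist : ∀ ε > 0, ∃ δ > 0, ∀ x y, dist x y < δ → D x y < ε) (s : Set X) :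
    IsOpen s ↔ ∀ x ∈ s, ∃ ε > (0 : ℝ), {y | D x y < ε} ⊆ s := by
  rw [Metric.isOpen_iff]
  refine forall₂_congr fun x _ => ⟨fun ⟨δ, hδ, hball⟩ => ?_, fun ⟨ε, hε, hsub⟩ => ?_⟩
  · obtain ⟨ε, hε, h⟩ := hD δ hδ
    exact ⟨ε, hε, fun y hy => hball (by rw [Metric.mem_ball, dist_comm]; exact h x y hy)⟩
  · obtain ⟨δ, hδ, h⟩ := hdist ε hε
    exact ⟨δ, hδ, fun y hy => hsub (h x y (by rwa [Metric.mem_ball, dist_comm] at hy))⟩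

theorem AdaptedScale.isCompatibleMetric_adaptedDist [CompactSpace X]
    (h : AdaptedScale f r θ N) : IsCompatibleMetric (adaptedDist f r θ) := by
  have hθ1 : (θ : ℝ) < 1 := h.theta_lt_one
  refine ⟨fun x y => ⟨fun h0 => ?_, fun hxy => hxy ▸ @dist_self X (adaptedPseudoMetric f r θ) x⟩,
    @dist_comm X (adaptedPseudoMetric f r θ), @dist_triangle X (adaptedPseudoMetric f r θ),
    isOpen_iff_of_uniformEquivalent _ (fun δ hδ => ?_) (fun ε hε => ?_)⟩
  · by_contra hxy
    have hρ := h.sepDist_le_two_mul_adaptedDist x y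
    rw [h0, mul_zero] at hρ
    exact hρ.not_gt (NNReal.coe_pos.2 (sepDist_pos h.theta_pos hxy))
  · obtain ⟨m, hm⟩ := h.expansiveWith.exists_orbitsClose_imp_dist_lt hδ
    refine ⟨θ ^ m / 2, by have := h.theta_pos; positivity, fun x y hxy => hm x y ?_⟩
    have hρ : (sepDist f r θ x y : ℝ) ≤ θ ^ m := by
      linarith [h.sepDist_le_two_mul_adaptedDist x y]
    exact (h.sepDist_le_pow_iff.1 (by exact_mod_cast hρ)).mono (by linarith [h.pos]) le_rfl
  · obtain ⟨m, hm⟩ := exists_pow_lt_of_lt_one hε hθ1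
    obtain ⟨δ, hδ, hclose⟩ := exists_dist_lt_imp_orbitsClose f h.pos m
    refine ⟨δ, hδ, fun x y hxy => ?_⟩
    calc adaptedDist f r θ x y ≤ sepDist f r θ x y := adaptedDist_le_sepDist f r θ x y
      _ ≤ θ ^ m := by exact_mod_cast h.sepDist_le_pow_iff.2 (hclose x y hxy)
      _ < ε := hm

theorem AdaptedScale.dist_le_of_adaptedDist_le (h : AdaptedScale f r θ N)
    (hxy : adaptedDist f r θ x y ≤ θ / 2) : dist x y ≤ r := by
  have hρ : (sepDist f r θ x y : ℝ) ≤ θ ^ 1 := by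
    linarith [h.sepDist_le_two_mul_adaptedDist x y, pow_one (θ : ℝ)]
  exact (h.sepDist_le_pow_iff.1 (by exact_mod_cast hρ)).dist_le one_pos

theorem AdaptedScale.sepDist_iterZ_le (h : AdaptedScale f r θ N) (s : ℤˣ)
    (hray : ∀ k : ℕ, dist (iterZ f (s * k) x) (iterZ f (s * k) y) ≤ r) (n : ℕ) :
    sepDist f r θ (iterZ f (s * n) x) (iterZ f (s * n) y) ≤ θ ^ n * sepDist f r θ x y := by
  by_cases hxy : x = y
  · simp [hxy, sepDist_self]
  · rw [sepDist_of_ne hxy, ← pow_add, h.sepDist_le_pow_iff, add_comm]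
    exact (h.sepDist_le_pow_iff.1 (sepDist_of_ne hxy).le).iterZ_of_semiorbit s hray n

theorem AdaptedScale.adaptedDist_iterZ_le (h : AdaptedScale f r θ N) (s : ℤˣ)
    (hray : ∀ k : ℕ, adaptedDist f r θ (iterZ f (s * k) x) (iterZ f (s * k) y) ≤ θ / 2)
    (n : ℕ) :
    adaptedDist f r θ (iterZ f (s * n) x) (iterZ f (s * n) y) ≤
      2 * θ ^ n * adaptedDist f r θ x y := by
  have hρ := h.sepDist_iterZ_le s (fun k => h.dist_le_of_adaptedDist_le (hray k)) n
  calc adaptedDist f r θ (iterZ f (s * n) x) (iterZ f (s * n) y)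
      ≤ sepDist f r θ (iterZ f (s * n) x) (iterZ f (s * n) y) := adaptedDist_le_sepDist ..
    _ ≤ θ ^ n * sepDist f r θ x y := by exact_mod_cast hρ
    _ ≤ θ ^ n * (2 * adaptedDist f r θ x y) := by
      gcongr; exact h.sepDist_le_two_mul_adaptedDist x y
    _ = 2 * θ ^ n * adaptedDist f r θ x y := by ring

theorem exists_lt_one_le_two_mul_pow (N : ℕ) : ∃ θ : ℝ≥0, 0 < θ ∧ θ < 1 ∧ 1 ≤ 2 * θ ^ N := by
  have hnear : ∀ᶠ θ : ℝ≥0 in 𝓝[<] 1, 1 < 2 * θ ^ N :=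
    nhdsWithin_le_nhds <| ((by fun_prop : Continuous fun θ : ℝ≥0 => 2 * θ ^ N).tendsto 1)
      |>.eventually (lt_mem_nhds (by norm_num))
  have := nhdsLT_neBot_of_exists_lt ⟨(0 : ℝ≥0), zero_lt_one⟩
  obtain ⟨θ, hθ, ⟨hθ0, hθ1⟩⟩ := (hnear.and (Ioo_mem_nhdsLT zero_lt_one)).exists
  exact ⟨θ, hθ0, hθ1, hθ.le⟩

theorem ExpansiveWith.exists_adaptedScale [CompactSpace X] {c : ℝ} (hc : ExpansiveWith f c) :
    ∃ r θ N, AdaptedScale f r θ N := by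
  have hc3 : 3 * (c / 3) = c := by ring
  obtain ⟨N, hN⟩ := hc.exists_orbitsClose_imp_dist_lt (div_pos hc.1 three_pos)
  obtain ⟨θ, hθ0, hθ1, hθN⟩ := exists_lt_one_le_two_mul_pow N
  exact ⟨c / 3, θ, N, by rwa [hc3], div_pos hc.1 three_pos, hθ0, hθ1,
    fun u v huv => (hN u v (by rwa [hc3] at huv)).le, hθN⟩

end AdaptedMetric

/-- (Reddy) An expansive homeomorphism of a compact metric space admits
a compatible hyperbolic metric `D`: there are `γ > 0`, `0 < λ < 1` and `a ≥ 1` such that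
points in the local stable (resp. unstable) set `W^s_γ(x, D)` (resp. `W^u_γ(x, D)`)
approach `x` exponentially fast under forward (resp. backward) iteration. -/
theorem stmt_10 {X : Type*} [MetricSpace X] [CompactSpace X] (f : X ≃ₜ X)
    (hexp : Expansive f) :
    ∃ dD : X → X → ℝ, IsCompatibleMetric dD ∧
      ∃ γ > (0 : ℝ), ∃ lam : ℝ, 0 < lam ∧ lam < 1 ∧ ∃ a : ℝ, 1 ≤ a ∧
        ∀ x y : X,
          ((∀ n : ℕ, dD (iterZ f n x) (iterZ f n y) ≤ γ) →
            ∀ n : ℕ, dD (iterZ f n x) (iterZ f n y) ≤ a * lam ^ n * dD x y) ∧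
          ((∀ n : ℕ, dD (iterZ f (-(n : ℤ)) x) (iterZ f (-(n : ℤ)) y) ≤ γ) →
            ∀ n : ℕ, dD (iterZ f (-(n : ℤ)) x) (iterZ f (-(n : ℤ)) y) ≤
              a * lam ^ n * dD x y) := by
  obtain ⟨c, hc⟩ := hexp
  obtain ⟨r, θ, N, h⟩ := hc.exists_adaptedScale
  refine ⟨adaptedDist f r θ, h.isCompatibleMetric_adaptedDist, θ / 2,
    half_pos (NNReal.coe_pos.2 h.theta_pos), θ, h.theta_pos, h.theta_lt_one, 2, one_le_two,
    fun x y => ⟨fun hs n => ?_, fun hu n => ?_⟩⟩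
  · simpa using h.adaptedDist_iterZ_le 1 (by simpa using hs) n
  · simpa using h.adaptedDist_iterZ_le (-1) (by simpa using hu) n
end
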